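/- Let fA (x₁, x₂) = (−x₁ + x₂³, −x₁ − x₂) and fB (x₁, x₂) = (−x₁, −x₂) be vector fields on ℝ × ℝ. The origin is stable for the system under arbitrary switching between fA and fB: for every ε > 0 there exists δ > 0 such that for every ω with ‖ω‖ < δ and every ν reachable from ω in the reflexive-transitive closure of the union of the fA-flow relation and the fB-flow relation, ‖ν‖ < ε. -/

import Mathlib

/-!
`V (x₁, x₂) = x₁² + x₂⁴ / 2` is a common Lyapunov function: along `fA` it changes at rate
`2x₁(−x₁ + x₂³) + 2x₂³(−x₁ − x₂) = −2(x₁² + x₂⁴)` (the cubic cross terms cancel), and along `fB`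
at the same rate, so it never increases under any switching. Inside the unit disc
`V ≤ x₁² + x₂²`, while `V < δ²` forces `x₁² < δ²` and `x₂² < 2δ`; hence a trajectory starting
`δ`-close to the origin stays in the disc of radius `√(3δ)` for `δ ≤ 1`.
-/

/-- The vector field `fA (x₁, x₂) = (−x₁ + x₂³, −x₁ − x₂)`. -/
def fA (x : ℝ × ℝ) : ℝ × ℝ := (-x.1 + x.2 ^ 3, -x.1 - x.2)

/-- The vector field `fB (x₁, x₂) = (−x₁, −x₂)`. -/
def fB (x : ℝ × ℝ) : ℝ × ℝ := (-x.1, -x.2)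

/-- The flow relation for a vector field `g` on `ℝ × ℝ`. -/
def FlowRel (g : ℝ × ℝ → ℝ × ℝ) (ω ν : ℝ × ℝ) : Prop :=
  ∃ t : ℝ, 0 ≤ t ∧ ∃ φ : ℝ → ℝ × ℝ, φ 0 = ω ∧ φ t = ν ∧
    ∀ s ∈ Set.Icc (0 : ℝ) t, HasDerivWithinAt φ (g (φ s)) (Set.Icc (0 : ℝ) t) s

/-- The Euclidean norm on `ℝ × ℝ`. -/
noncomputable def enorm2 (x : ℝ × ℝ) : ℝ := Real.sqrt (x.1 ^ 2 + x.2 ^ 2)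

open Set

theorem Relation.ReflTransGen.apply_le_of_forall {α β : Type*} [Preorder β] {r : α → α → Prop}
    {V : α → β} (hr : ∀ a b, r a b → V b ≤ V a) {a b : α} (h : Relation.ReflTransGen r a b) :
    V b ≤ V a := by
  induction h with
  | refl => exact le_rfl
  | tail _ hstep ih => exact (hr _ _ hstep).trans ih

theorem FlowRel.le_of_hasFDerivAt {g : ℝ × ℝ → ℝ × ℝ} {V : ℝ × ℝ → ℝ}
    {V' : ℝ × ℝ → ℝ × ℝ →L[ℝ] ℝ} (hV : ∀ x, HasFDerivAt V (V' x) x)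
    (hVg : ∀ x, V' x (g x) ≤ 0) {a b : ℝ × ℝ} (h : FlowRel g a b) : V b ≤ V a := by
  obtain ⟨t, ht, φ, rfl, rfl, hφ⟩ := h
  have hVφ : ∀ s ∈ Icc 0 t, HasDerivWithinAt (V ∘ φ) (V' (φ s) (g (φ s))) (Icc 0 t) s :=
    fun s hs ↦ (hV _).comp_hasDerivWithinAt s (hφ s hs)
  have hanti : AntitoneOn (V ∘ φ) (Icc 0 t) :=
    antitoneOn_of_hasDerivWithinAt_nonpos (convex_Icc 0 t)
      (fun s hs ↦ (hVφ s hs).continuousWithinAt)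
      (fun s hs ↦ (hVφ s (interior_subset hs)).mono interior_subset) (fun _ _ ↦ hVg _)
  exact hanti (left_mem_Icc.2 ht) (right_mem_Icc.2 ht) ht

noncomputable def commonLyapunov (x : ℝ × ℝ) : ℝ := x.1 ^ 2 + x.2 ^ 4 / 2

noncomputable def commonLyapunovFDeriv (x : ℝ × ℝ) : ℝ × ℝ →L[ℝ] ℝ :=
  (2 * x.1) • ContinuousLinearMap.fst ℝ ℝ ℝ + (2 * x.2 ^ 3) • ContinuousLinearMap.snd ℝ ℝ ℝ

theorem hasFDerivAt_commonLyapunov (x : ℝ × ℝ) :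
    HasFDerivAt commonLyapunov (commonLyapunovFDeriv x) x := by
  have h := ((hasFDerivAt_fst (𝕜 := ℝ) (p := x)).pow 2).add
    (((hasFDerivAt_snd (𝕜 := ℝ) (p := x)).pow 4).mul_const (1 / 2 : ℝ))
  have hV : commonLyapunov = (fun y ↦ y.1 ^ 2) + fun y ↦ y.2 ^ 4 * (1 / 2) := by
    funext y; simp only [commonLyapunov, Pi.add_apply]; ring
  rw [hV]
  refine h.congr_fderiv ?_
  ext <;> simp [commonLyapunovFDeriv]; ring

theorem commonLyapunovFDeriv_fA (x : ℝ × ℝ) :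
    commonLyapunovFDeriv x (fA x) = -2 * (x.1 ^ 2 + x.2 ^ 4) := by
  simp [commonLyapunovFDeriv, fA]; ring

theorem commonLyapunovFDeriv_fB (x : ℝ × ℝ) :
    commonLyapunovFDeriv x (fB x) = -2 * (x.1 ^ 2 + x.2 ^ 4) := by
  simp [commonLyapunovFDeriv, fB]; ring

theorem commonLyapunov_le_of_reach {a b : ℝ × ℝ}
    (h : Relation.ReflTransGen (fun a b ↦ FlowRel fA a b ∨ FlowRel fB a b) a b) :
    commonLyapunov b ≤ commonLyapunov a := by
  refine h.apply_le_of_forall fun a b hab ↦ ?_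
  rcases hab with hA | hB
  · exact hA.le_of_hasFDerivAt hasFDerivAt_commonLyapunov fun x ↦ by
      rw [commonLyapunovFDeriv_fA]; nlinarith [sq_nonneg x.1, sq_nonneg (x.2 ^ 2)]
  · exact hB.le_of_hasFDerivAt hasFDerivAt_commonLyapunov fun x ↦ by
      rw [commonLyapunovFDeriv_fB]; nlinarith [sq_nonneg x.1, sq_nonneg (x.2 ^ 2)]

theorem commonLyapunov_le_of_sq_add_sq_le_one {x : ℝ × ℝ} (h : x.1 ^ 2 + x.2 ^ 2 ≤ 1) :
    commonLyapunov x ≤ x.1 ^ 2 + x.2 ^ 2 := by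
  unfold commonLyapunov
  nlinarith [sq_nonneg x.1, sq_nonneg x.2]

theorem sq_add_sq_lt_of_commonLyapunov_lt {x : ℝ × ℝ} {r : ℝ} (hr : 0 ≤ r)
    (h : commonLyapunov x < r ^ 2) : x.1 ^ 2 + x.2 ^ 2 < r ^ 2 + 2 * r := by
  unfold commonLyapunov at h
  have h₂ : x.2 ^ 2 < 2 * r := by
    nlinarith [sq_nonneg x.1, sq_nonneg x.2, sq_nonneg (x.2 ^ 2 + 2 * r)]
  nlinarith [sq_nonneg (x.2 ^ 2)]

theorem enorm2_lt_iff {x : ℝ × ℝ} {r : ℝ} (hr : 0 < r) :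
    enorm2 x < r ↔ x.1 ^ 2 + x.2 ^ 2 < r ^ 2 :=
  Real.sqrt_lt' hr

theorem origin_stable_arbitrary_switching :
    ∀ ε : ℝ, 0 < ε → ∃ δ : ℝ, 0 < δ ∧
      ∀ ω : ℝ × ℝ, enorm2 ω < δ →
        ∀ ν : ℝ × ℝ, Relation.ReflTransGen (fun a b => FlowRel fA a b ∨ FlowRel fB a b) ω ν →
          enorm2 ν < ε := by
  intro ε hε
  obtain ⟨δ, hδ, hδ1, hδε⟩ : ∃ δ : ℝ, 0 < δ ∧ δ ≤ 1 ∧ δ ≤ ε ^ 2 / 3 :=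
    ⟨min 1 (ε ^ 2 / 3), by positivity, min_le_left _ _, min_le_right _ _⟩
  refine ⟨δ, hδ, fun ω hω ν hreach ↦ ?_⟩
  have hω2 : ω.1 ^ 2 + ω.2 ^ 2 < δ ^ 2 := (enorm2_lt_iff hδ).1 hω
  have hVω : commonLyapunov ω < δ ^ 2 :=
    (commonLyapunov_le_of_sq_add_sq_le_one (by nlinarith)).trans_lt hω2
  have hν2 : ν.1 ^ 2 + ν.2 ^ 2 < δ ^ 2 + 2 * δ :=
    sq_add_sq_lt_of_commonLyapunov_lt hδ.le ((commonLyapunov_le_of_reach hreach).trans_lt hVω)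
  exact (enorm2_lt_iff hε).2 (by nlinarith)
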